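/- arXiv:1308.0998 — 7 statements merged into one kernel-verified Lean document; each statement's English description precedes it below -/
import Mathlib

section
/- Fix α, β > 0 and x₁, x₂ ∈ ℝ, and set y₁ = x + x₁, y₂ = x + x₂. Define the complex-valued function Q(x) = 2√2 (β + iα) e^{β y₂ + i α y₁} / (1 + e^{2(β y₂ + i α y₁)}), defined at all x where the denominator is nonzero. Then at every such x, Q''(x) - (β + iα)² Q(x) + Q(x)³ = 0. -/
/-!
With `E(x) = exp(k x + c)`, `k = β + iα`, the profile is `Q = A · E / (1 + E²)` with
`A = 2√2 k`, i.e. `Q = (A / 2) sech(k x + c)`. Since `E' = k E`, two applications of the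
quotient rule give `(E / (1 + E²))'' = k² u - 8 k² u³` for `u = E / (1 + E²)` (the equation
`sech'' = sech - 2 sech³`), and the normalisation `A² = 8 k²` turns this into
`Q'' = k² Q - Q³`.
-/

open Complex Filter Topology

section ExpSolution

variable {E : ℝ → ℂ} {k : ℂ}

theorem hasDerivAt_sq_of_hasDerivAt_eq_mul (hE : ∀ y, HasDerivAt E (k * E y) y) (y : ℝ) :
    HasDerivAt (fun y => E y ^ 2) (2 * k * E y ^ 2) y :=
  ((hE y).fun_pow 2).congr_deriv (by push_cast; ring)

theorem hasDerivAt_div_one_add_sq (hE : ∀ y, HasDerivAt E (k * E y) y) {y : ℝ}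
    (hy : 1 + E y ^ 2 ≠ 0) :
    HasDerivAt (fun y => E y / (1 + E y ^ 2))
      (k * (E y * (1 - E y ^ 2)) / (1 + E y ^ 2) ^ 2) y :=
  ((hE y).div ((hasDerivAt_sq_of_hasDerivAt_eq_mul hE y).const_add 1) hy).congr_deriv
    (by field_simp; ring)

theorem hasDerivAt_deriv_div_one_add_sq (hE : ∀ y, HasDerivAt E (k * E y) y) {y : ℝ}
    (hy : 1 + E y ^ 2 ≠ 0) :
    HasDerivAt (fun y => k * (E y * (1 - E y ^ 2)) / (1 + E y ^ 2) ^ 2)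
      (k ^ 2 * E y * (1 - 6 * E y ^ 2 + E y ^ 4) / (1 + E y ^ 2) ^ 3) y := by
  have hsq := hasDerivAt_sq_of_hasDerivAt_eq_mul hE y
  have hnum := ((hE y).fun_mul (hsq.const_sub 1)).const_mul k
  have hden := (hsq.const_add 1).fun_pow 2
  exact (hnum.div hden (pow_ne_zero 2 hy)).congr_deriv (by field_simp; ring)

theorem deriv_deriv_div_one_add_sq (hE : ∀ y, HasDerivAt E (k * E y) y) {y : ℝ}
    (hy : 1 + E y ^ 2 ≠ 0) :
    deriv (deriv fun y => E y / (1 + E y ^ 2)) y =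
      k ^ 2 * (E y / (1 + E y ^ 2)) - 8 * k ^ 2 * (E y / (1 + E y ^ 2)) ^ 3 := by
  have hcont : Continuous fun y => 1 + E y ^ 2 :=
    continuous_const.add ((continuous_iff_continuousAt.2 fun y => (hE y).continuousAt).pow 2)
  have hderiv : deriv (fun y => E y / (1 + E y ^ 2)) =ᶠ[𝓝 y]
      fun y => k * (E y * (1 - E y ^ 2)) / (1 + E y ^ 2) ^ 2 := by
    filter_upwards [(isOpen_ne.preimage hcont).mem_nhds hy] with z hz
    exact (hasDerivAt_div_one_add_sq hE hz).deriv
  rw [hderiv.deriv_eq, (hasDerivAt_deriv_div_one_add_sq hE hy).deriv]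
  field_simp
  ring

end ExpSolution

theorem hasDerivAt_cexp_affine (k c : ℂ) (y : ℝ) :
    HasDerivAt (fun y : ℝ => cexp (k * y + c)) (k * cexp (k * y + c)) y := by
  have h := (((hasDerivAt_id (y : ℂ)).const_mul k).add_const c).cexp.comp_ofReal
  simpa [mul_comm] using h

theorem stmt_2_general (α β x₁ x₂ : ℝ) (Q : ℝ → ℂ)
    (hQ : ∀ x : ℝ, Q x = 2 * Real.sqrt 2 * ((β : ℂ) + I * α) *
      Complex.exp ((β : ℂ) * (x + x₂) + I * α * (x + x₁)) /
      (1 + Complex.exp (2 * ((β : ℂ) * (x + x₂) + I * α * (x + x₁)))))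
    (x : ℝ)
    (hx : 1 + Complex.exp (2 * ((β : ℂ) * (x + x₂) + I * α * (x + x₁))) ≠ 0) :
    deriv (deriv Q) x - ((β : ℂ) + I * α) ^ 2 * Q x + Q x ^ 3 = 0 := by
  set k : ℂ := (β : ℂ) + I * α with hk
  set A : ℂ := 2 * Real.sqrt 2 * k
  set E : ℝ → ℂ := fun y => cexp (k * y + (β * x₂ + I * α * x₁))
  have harg : ∀ y : ℝ, (β : ℂ) * (y + x₂) + I * α * (y + x₁) = k * y + (β * x₂ + I * α * x₁) :=
    fun y => by rw [hk]; ring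
  have hexp : ∀ y : ℝ, cexp (2 * ((β : ℂ) * (y + x₂) + I * α * (y + x₁))) = E y ^ 2 := by
    intro y
    rw [sq, ← exp_add, harg, two_mul]
  have hQE : Q = fun y => A * (E y / (1 + E y ^ 2)) := by
    funext y
    rw [hQ y, hexp, harg, mul_div_assoc]
  have hx' : 1 + E x ^ 2 ≠ 0 := hexp x ▸ hx
  have hA : A ^ 2 = 8 * k ^ 2 := by
    have : ((Real.sqrt 2 : ℝ) : ℂ) ^ 2 = 2 := by
      rw [← ofReal_pow, Real.sq_sqrt zero_le_two, ofReal_ofNat]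
    linear_combination 4 * k ^ 2 * this
  rw [hQE, deriv_const_mul_field', deriv_const_mul_field']
  beta_reduce
  rw [deriv_deriv_div_one_add_sq (fun y => hasDerivAt_cexp_affine k _ y) hx']
  linear_combination (E x / (1 + E x ^ 2)) ^ 3 * A * hA

theorem stmt_2 (α β x₁ x₂ : ℝ) (hα : 0 < α) (hβ : 0 < β) (Q : ℝ → ℂ)
    (hQ : ∀ x : ℝ, Q x = 2 * Real.sqrt 2 * ((β : ℂ) + I * α) *
      Complex.exp ((β : ℂ) * (x + x₂) + I * α * (x + x₁)) /
      (1 + Complex.exp (2 * ((β : ℂ) * (x + x₂) + I * α * (x + x₁)))))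
    (x : ℝ)
    (hx : 1 + Complex.exp (2 * ((β : ℂ) * (x + x₂) + I * α * (x + x₁))) ≠ 0) :
    deriv (deriv Q) x - ((β : ℂ) + I * α) ^ 2 * Q x + Q x ^ 3 = 0 :=
  stmt_2_general α β x₁ x₂ Q hQ x hx
end

section
/- With Q as the complex soliton profile Q(x) = 2√2 (β+iα) e^{β y₂ + iα y₁}/(1 + e^{2(β y₂ + iα y₁)}) (for α,β > 0, y₁ = x + x₁, y₂ = x + x₂), at every x where Q is defined one has the first-integral identity Q'(x)² - (β+iα)² Q(x)² + (1/2) Q(x)⁴ = 0. -/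
/-!
Writing `e = exp φ` with `φ' = k`, the profile `q = c e / (1 + e²)` has
`q' = k q (1 - e²) / (1 + e²)`, so `k² q² - q'² = 4 k² q² e² / (1 + e²)² = 4 k² q⁴ / c²`,
which is `q⁴ / 2` exactly when `c² = 8 k²`; here `c = 2√2 k`.
-/

open Complex

theorem hasDerivAt_mul_exp_div_one_add_exp_two_mul {φ : ℝ → ℂ} {k : ℂ} {x : ℝ}
    (hφ : HasDerivAt φ k x) (c : ℂ) (hx : 1 + exp (2 * φ x) ≠ 0) :
    HasDerivAt (fun t => c * exp (φ t) / (1 + exp (2 * φ t)))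
      (k * (c * exp (φ x) / (1 + exp (φ x) ^ 2)) * (1 - exp (φ x) ^ 2) /
        (1 + exp (φ x) ^ 2)) x := by
  have hden : HasDerivAt (fun t => 1 + exp (2 * φ t)) (exp (2 * φ x) * (2 * k)) x :=
    ((hφ.const_mul 2).cexp).const_add 1
  refine ((hφ.cexp.const_mul c).div hden hx).congr_deriv ?_
  rw [two_mul, exp_add, ← sq] at hx ⊢
  field_simp
  ring

theorem sq_sub_sq_mul_sq_add_pow_four_eq_zero {k c e : ℂ} (hc : c ^ 2 = 8 * k ^ 2)
    (he : 1 + e ^ 2 ≠ 0) :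
    (k * (c * e / (1 + e ^ 2)) * (1 - e ^ 2) / (1 + e ^ 2)) ^ 2
      - k ^ 2 * (c * e / (1 + e ^ 2)) ^ 2 + 1 / 2 * (c * e / (1 + e ^ 2)) ^ 4 = 0 := by
  field_simp
  linear_combination (c ^ 2 * e ^ 4) * hc

theorem soliton_first_integral {φ : ℝ → ℂ} {k c : ℂ} {x : ℝ} (hφ : HasDerivAt φ k x)
    (hc : c ^ 2 = 8 * k ^ 2) (hx : 1 + exp (2 * φ x) ≠ 0) :
    let q := fun t => c * exp (φ t) / (1 + exp (2 * φ t))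
    deriv q x ^ 2 - k ^ 2 * q x ^ 2 + 1 / 2 * q x ^ 4 = 0 := by
  intro q
  rw [(hasDerivAt_mul_exp_div_one_add_exp_two_mul hφ c hx).deriv]
  simp only [q]
  rw [two_mul, exp_add, ← sq] at hx ⊢
  exact sq_sub_sq_mul_sq_add_pow_four_eq_zero hc hx

theorem hasDerivAt_linear_phase (α β x₁ x₂ x : ℝ) :
    HasDerivAt (fun t : ℝ => (β : ℂ) * (t + x₂) + I * α * (t + x₁)) ((β : ℂ) + I * α) x := by
  have hre : HasDerivAt (fun t : ℝ => (t : ℂ)) 1 x := (hasDerivAt_id x).ofReal_comp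
  refine (((hre.add_const (x₂ : ℂ)).const_mul (β : ℂ)).add
    ((hre.add_const (x₁ : ℂ)).const_mul (I * α))).congr_deriv ?_
  ring

theorem two_mul_sqrt_two_mul_sq (k : ℂ) : (2 * Real.sqrt 2 * k) ^ 2 = 8 * k ^ 2 := by
  have h : ((Real.sqrt 2 : ℝ) : ℂ) ^ 2 = 2 := by
    norm_cast
    exact Real.sq_sqrt zero_le_two
  rw [mul_pow, mul_pow, h]
  ring

theorem stmt_3_general (α β x₁ x₂ : ℝ) (Q : ℝ → ℂ)
    (hQ : ∀ x : ℝ, Q x = 2 * Real.sqrt 2 * ((β : ℂ) + I * α) *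
      Complex.exp ((β : ℂ) * (x + x₂) + I * α * (x + x₁)) /
      (1 + Complex.exp (2 * ((β : ℂ) * (x + x₂) + I * α * (x + x₁)))))
    (x : ℝ)
    (hx : 1 + Complex.exp (2 * ((β : ℂ) * (x + x₂) + I * α * (x + x₁))) ≠ 0) :
    deriv Q x ^ 2 - ((β : ℂ) + I * α) ^ 2 * Q x ^ 2 + (1 / 2) * Q x ^ 4 = 0 := by
  rw [funext hQ]
  exact soliton_first_integral (hasDerivAt_linear_phase α β x₁ x₂ x)
    (two_mul_sqrt_two_mul_sq _) hx

theorem stmt_3 (α β x₁ x₂ : ℝ) (hα : 0 < α) (hβ : 0 < β) (Q : ℝ → ℂ)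
    (hQ : ∀ x : ℝ, Q x = 2 * Real.sqrt 2 * ((β : ℂ) + I * α) *
      Complex.exp ((β : ℂ) * (x + x₂) + I * α * (x + x₁)) /
      (1 + Complex.exp (2 * ((β : ℂ) * (x + x₂) + I * α * (x + x₁)))))
    (x : ℝ)
    (hx : 1 + Complex.exp (2 * ((β : ℂ) * (x + x₂) + I * α * (x + x₁))) ≠ 0) :
    deriv Q x ^ 2 - ((β : ℂ) + I * α) ^ 2 * Q x ^ 2 + (1 / 2) * Q x ^ 4 = 0 :=
  stmt_3_general α β x₁ x₂ Q hQ x hx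
end

section
/- Let α, β > 0 and let Q(x) = 2√2 (β+iα) e^{(β + iα)x} / (1 + e^{2(β+iα)x}) be the complex soliton with shifts x₁ = x₂ = 0. Then Q is defined for every x ∈ ℝ (the denominator never vanishes), and the improper integral (1/2)∫_ℝ Q(x)² dx converges and equals 2(β + iα). -/
/-!
With `c = β + iα` and `a = 2c`, `Q² = 4c · a e^{ax} / (1 + e^{ax})²`. Since `Re a = 2β > 0`,
`|e^{ax}| = e^{2βx}` equals `1` only at `x = 0`, so `1 + e^{ax}` never vanishes. The second factor
is even and `O(e^{ax})` at `-∞`, hence integrable; its primitive `-(1 + e^{ax})⁻¹` tends to `-1`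
at `-∞` and to `0` at `+∞`, so its integral is `1` and `∫ Q² = 4c`.
-/

open Complex MeasureTheory Filter Topology Asymptotics

namespace ComplexLogistic

variable {a : ℂ}

noncomputable def density (a : ℂ) (x : ℝ) : ℂ := a * exp (a * x) / (1 + exp (a * x)) ^ 2

lemma one_add_exp_ne_zero (ha : 0 < a.re) (x : ℝ) : 1 + exp (a * x) ≠ 0 := by
  intro h
  have hexp : exp (a * x) = -1 := eq_neg_of_add_eq_zero_right h
  have hx : a.re * x = 0 := by
    simpa [Complex.norm_exp] using congrArg norm hexp
  rw [(mul_eq_zero.mp hx).resolve_left ha.ne'] at hexp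
  norm_num at hexp

lemma tendsto_exp_mul_atBot (ha : 0 < a.re) :
    Tendsto (fun x : ℝ => exp (a * x)) atBot (𝓝 0) := by
  rw [tendsto_exp_nhds_zero_iff]
  simpa using tendsto_id.const_mul_atBot ha

lemma density_neg (ha : 0 < a.re) (x : ℝ) : density a (-x) = density a x := by
  have h := one_add_exp_ne_zero ha x
  have h' : 1 + exp (a * ↑(-x)) ≠ 0 := one_add_exp_ne_zero ha (-x)
  simp only [density, ofReal_neg, mul_neg, exp_neg] at h' ⊢
  have := exp_ne_zero (a * x)
  rw [add_comm] at h
  rw [add_comm 1 (exp (a * x))]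
  field_simp

lemma continuous_density (ha : 0 < a.re) : Continuous (density a) := by
  refine Continuous.div (by fun_prop) (by fun_prop) fun x => ?_
  exact pow_ne_zero 2 (one_add_exp_ne_zero ha x)

lemma hasDerivAt_neg_inv_one_add_exp (ha : 0 < a.re) (x : ℝ) :
    HasDerivAt (fun x : ℝ => -(1 + exp (a * x))⁻¹) (density a x) x := by
  have hlin : HasDerivAt (fun x : ℝ => a * x) a x := by
    simpa using (hasDerivAt_id (x : ℝ)).ofReal_comp.const_mul a
  refine ((hlin.cexp.const_add 1).fun_inv (one_add_exp_ne_zero ha x)).fun_neg.congr_deriv ?_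
  rw [density]
  ring

lemma tendsto_neg_inv_one_add_exp_atBot (ha : 0 < a.re) :
    Tendsto (fun x : ℝ => -(1 + exp (a * x))⁻¹) atBot (𝓝 (-1)) := by
  simpa using (((tendsto_exp_mul_atBot ha).const_add 1).inv₀ (by norm_num)).neg

lemma tendsto_neg_inv_one_add_exp_atTop (ha : 0 < a.re) :
    Tendsto (fun x : ℝ => -(1 + exp (a * x))⁻¹) atTop (𝓝 0) := by
  -- `-(1 + e^{ax})⁻¹ = -1 + (1 + e^{-ax})⁻¹`, and `e^{-ax} → 0` as `x → ∞`
  have h : Tendsto (fun x : ℝ => -1 + (1 + exp (a * ↑(-x)))⁻¹) atTop (𝓝 0) := by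
    have := ((tendsto_neg_inv_one_add_exp_atBot ha).comp tendsto_neg_atTop_atBot).neg
    simpa [neg_add_eq_sub] using this.const_add (-1)
  refine h.congr fun x => ?_
  have h₁ := one_add_exp_ne_zero ha x
  have h₂ := one_add_exp_ne_zero ha (-x)
  simp only [ofReal_neg, mul_neg, exp_neg] at h₂ ⊢
  have := exp_ne_zero (a * x)
  rw [add_comm] at h₁
  rw [add_comm 1 (exp (a * x))]
  field_simp
  ring

lemma density_isBigO_atBot (ha : 0 < a.re) :
    density a =O[atBot] fun x : ℝ => exp (a * x) := by
  have hbdd : Tendsto (fun x : ℝ => a / (1 + exp (a * x)) ^ 2) atBot (𝓝 (a / (1 + 0) ^ 2)) :=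
    tendsto_const_nhds.div (((tendsto_exp_mul_atBot ha).const_add 1).pow 2) (by norm_num)
  have := (isBigO_refl (fun x : ℝ => exp (a * x)) atBot).mul (hbdd.isBigO_one ℂ)
  simp only [mul_one] at this
  refine this.congr_left fun x => ?_
  simp only [density]
  ring

lemma density_isBigO_atTop (ha : 0 < a.re) :
    density a =O[atTop] fun x : ℝ => exp (-a * x) := by
  have := (density_isBigO_atBot ha).comp_tendsto tendsto_neg_atTop_atBot
  refine this.congr (fun x => density_neg ha x) fun x => ?_
  simp

lemma integrable_density (ha : 0 < a.re) : Integrable (density a) :=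
  (continuous_density ha).locallyIntegrable.integrable_of_isBigO_atBot_atTop
    (density_isBigO_atBot ha) ⟨_, Iic_mem_atBot 0, integrableOn_exp_mul_complex_Iic ha 0⟩
    (density_isBigO_atTop ha)
    ⟨_, Ioi_mem_atTop 0, integrableOn_exp_mul_complex_Ioi (by simpa using ha) 0⟩

lemma integral_density (ha : 0 < a.re) : ∫ x, density a x = 1 := by
  rw [integral_of_hasDerivAt_of_tendsto (hasDerivAt_neg_inv_one_add_exp ha)
    (integrable_density ha) (tendsto_neg_inv_one_add_exp_atBot ha)
    (tendsto_neg_inv_one_add_exp_atTop ha)]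
  ring

lemma soliton_sq (c : ℂ) (x : ℝ) :
    (2 * Real.sqrt 2 * c * exp (c * x) / (1 + exp (2 * c * x))) ^ 2 =
      4 * c * density (2 * c) x := by
  have hsqrt : ((Real.sqrt 2 : ℝ) : ℂ) ^ 2 = 2 := by norm_cast; simp
  have hexp : exp (c * x) ^ 2 = exp (2 * c * x) := by rw [← exp_nat_mul]; ring_nf
  rw [density, div_pow, mul_pow, mul_pow, mul_pow, hsqrt, hexp]
  ring

end ComplexLogistic

open ComplexLogistic in
theorem stmt_5_general (α β : ℝ) (hβ : 0 < β) (Q : ℝ → ℂ)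
    (hQ : ∀ x : ℝ, Q x = 2 * Real.sqrt 2 * ((β : ℂ) + I * α) *
      Complex.exp (((β : ℂ) + I * α) * x) / (1 + Complex.exp (2 * ((β : ℂ) + I * α) * x))) :
    (∀ x : ℝ, 1 + Complex.exp (2 * ((β : ℂ) + I * α) * x) ≠ 0) ∧
    MeasureTheory.Integrable (fun x : ℝ => Q x ^ 2) ∧
    (1 / 2 : ℂ) * ∫ x : ℝ, Q x ^ 2 = 2 * ((β : ℂ) + I * α) := by
  set c : ℂ := β + I * α
  have hc : 0 < (2 * c).re := by simpa [c] using hβ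
  have hQ_sq : (fun x : ℝ => Q x ^ 2) = fun x => 4 * c * density (2 * c) x := by
    funext x
    rw [hQ, soliton_sq]
  refine ⟨one_add_exp_ne_zero hc, ?_, ?_⟩
  · rw [hQ_sq]
    exact (integrable_density hc).const_mul _
  · rw [hQ_sq, integral_const_mul, integral_density hc]
    ring

theorem stmt_5 (α β : ℝ) (hα : 0 < α) (hβ : 0 < β) (Q : ℝ → ℂ)
    (hQ : ∀ x : ℝ, Q x = 2 * Real.sqrt 2 * ((β : ℂ) + I * α) *
      Complex.exp (((β : ℂ) + I * α) * x) / (1 + Complex.exp (2 * ((β : ℂ) + I * α) * x))) :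
    (∀ x : ℝ, 1 + Complex.exp (2 * ((β : ℂ) + I * α) * x) ≠ 0) ∧
    MeasureTheory.Integrable (fun x : ℝ => Q x ^ 2) ∧
    (1 / 2 : ℂ) * ∫ x : ℝ, Q x ^ 2 = 2 * ((β : ℂ) + I * α) :=
  stmt_5_general α β hβ Q hQ
end

section
/- Let α, β > 0 and x₁, x₂ ∈ ℝ with y₁ = x + x₁, y₂ = x + x₂. Suppose 1 + e^{2(β y₂ + iα y₁)} ≠ 0 for all x in (-∞, x₀]. Then for the complex soliton Q(x) = 2√2 (β+iα) e^{β y₂ + iα y₁}/(1 + e^{2(β y₂ + iα y₁)}), one has (1/2)∫_{-∞}^{x₀} Q² = 2(β+iα) e^{2(β y₂ + iα y₁)} / (1 + e^{2(β y₂ + iα y₁)}) evaluated at x = x₀. -/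
/-!
With `c = β + iα` one has `E x = exp (c x + d)`, so `E' = c E`, and `F = 4c E² / (1 + E²)`
satisfies `F' = 8c² E² / (1 + E²)² = Q²`. Since `Re c = β > 0`, `E` decays exponentially at
`-∞`; hence `Q² = O(E)` is integrable on `(-∞, x₀]`, `F → 0`, and the integral equals `F x₀`.
-/

open Complex MeasureTheory Set Filter Topology Asymptotics

section ExpMulAdd

variable {c : ℂ} (d : ℂ)

lemma hasDerivAt_cexp_mul_add (x : ℝ) :
    HasDerivAt (fun y : ℝ => cexp (c * y + d)) (c * cexp (c * x + d)) x := by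
  have hlin : HasDerivAt (fun y : ℂ => c * y + d) c x := by
    simpa using ((hasDerivAt_id (x : ℂ)).const_mul c).add_const d
  simpa [mul_comm] using hlin.cexp.comp_ofReal

variable {d}

lemma tendsto_cexp_mul_add_atBot (hc : 0 < c.re) :
    Tendsto (fun y : ℝ => cexp (c * y + d)) atBot (𝓝 0) := by
  refine tendsto_exp_nhds_zero_iff.2 ?_
  simp only [add_re, mul_re, ofReal_re, ofReal_im, mul_zero, sub_zero]
  exact tendsto_atBot_add_const_right _ _ (tendsto_id.const_mul_atBot hc)

lemma integrableOn_Iic_cexp_mul_add (hc : 0 < c.re) (a : ℝ) :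
    IntegrableOn (fun y : ℝ => cexp (c * y + d)) (Iic a) := by
  simp_rw [exp_add]
  exact (integrableOn_exp_mul_complex_Iic hc a).mul_const (cexp d)

end ExpMulAdd

section Soliton

variable {c : ℂ} {E : ℝ → ℂ} {a : ℝ}

lemma hasDerivAt_sq_div_one_add_sq {x : ℝ} (hE : HasDerivAt E (c * E x) x)
    (hx : 1 + E x ^ 2 ≠ 0) :
    HasDerivAt (fun y => 4 * c * E y ^ 2 / (1 + E y ^ 2))
      (8 * c ^ 2 * E x ^ 2 / (1 + E x ^ 2) ^ 2) x := by
  have hsq : HasDerivAt (fun y => E y ^ 2) (2 * c * E x ^ 2) x :=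
    (hE.fun_pow 2).congr_deriv (by ring)
  refine ((hsq.const_mul (4 * c)).fun_div (hsq.const_add 1) hx).congr_deriv ?_
  ring

lemma integrableOn_Iic_sq_div_one_add_sq_sq (hE : Continuous E)
    (hlim : Tendsto E atBot (𝓝 0)) (hint : IntegrableOn E (Iic a))
    (hden : ∀ x ≤ a, 1 + E x ^ 2 ≠ 0) :
    IntegrableOn (fun x => E x ^ 2 / (1 + E x ^ 2) ^ 2) (Iic a) := by
  have hcont : ContinuousOn (fun x => E x ^ 2 / (1 + E x ^ 2) ^ 2) (Iic a) :=
    (hE.pow 2).continuousOn.div (by fun_prop) fun x hx => pow_ne_zero 2 (hden x hx)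
  have hinv : Tendsto (fun x => ((1 + E x ^ 2) ^ 2)⁻¹) atBot (𝓝 1) := by
    simpa using ((hlim.pow 2).const_add 1).pow 2 |>.inv₀ (by norm_num)
  have hO : (fun x => E x ^ 2 / (1 + E x ^ 2) ^ 2) =O[atBot] E := by
    have := ((hlim.isBigO_one ℂ).mul (isBigO_refl E atBot)).mul (hinv.isBigO_one ℂ)
    simpa [sq, div_eq_mul_inv] using this
  exact (hcont.locallyIntegrableOn measurableSet_Iic).integrableOn_of_isBigO_atBot hO
    (integrableAtFilter_atBot_iff.2 ⟨a, hint⟩)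

theorem integral_Iic_sq_div_one_add_sq_sq (hE : ∀ x, HasDerivAt E (c * E x) x)
    (hlim : Tendsto E atBot (𝓝 0)) (hint : IntegrableOn E (Iic a))
    (hden : ∀ x ≤ a, 1 + E x ^ 2 ≠ 0) :
    IntegrableOn (fun x => 8 * c ^ 2 * E x ^ 2 / (1 + E x ^ 2) ^ 2) (Iic a) ∧
      ∫ x in Iic a, 8 * c ^ 2 * E x ^ 2 / (1 + E x ^ 2) ^ 2 = 4 * c * E a ^ 2 / (1 + E a ^ 2) := by
  have hint' : IntegrableOn (fun x => 8 * c ^ 2 * E x ^ 2 / (1 + E x ^ 2) ^ 2) (Iic a) := by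
    simp_rw [mul_div_assoc]
    exact (integrableOn_Iic_sq_div_one_add_sq_sq (continuous_iff_continuousAt.2 fun x =>
      (hE x).continuousAt) hlim hint hden).const_mul _
  have hprim : Tendsto (fun x => 4 * c * E x ^ 2 / (1 + E x ^ 2)) atBot (𝓝 0) := by
    simpa [Pi.div_def] using
      ((hlim.pow 2).const_mul (4 * c)).div ((hlim.pow 2).const_add 1) (by norm_num)
  refine ⟨hint', ?_⟩
  rw [integral_Iic_of_hasDerivAt_of_tendsto' (fun x hx => hasDerivAt_sq_div_one_add_sq (hE x)
    (hden x hx)) hint' hprim, sub_zero]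

end Soliton

theorem stmt_6_general (α β x₁ x₂ x₀ : ℝ) (hβ : 0 < β) (E Q : ℝ → ℂ)
    (hE : ∀ x : ℝ, E x = Complex.exp ((β : ℂ) * (x + x₂) + I * α * (x + x₁)))
    (hQ : ∀ x : ℝ, Q x = 2 * Real.sqrt 2 * ((β : ℂ) + I * α) * E x / (1 + (E x) ^ 2))
    (hden : ∀ x ≤ x₀, 1 + (E x) ^ 2 ≠ 0) :
    MeasureTheory.IntegrableOn (fun x : ℝ => Q x ^ 2) (Set.Iic x₀) ∧
    (1 / 2 : ℂ) * ∫ x in Set.Iic x₀, Q x ^ 2 =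
      2 * ((β : ℂ) + I * α) * (E x₀) ^ 2 / (1 + (E x₀) ^ 2) := by
  set c : ℂ := β + I * α
  have hc : 0 < c.re := by simpa [c] using hβ
  have hQsq : ∀ x, Q x ^ 2 = 8 * c ^ 2 * E x ^ 2 / (1 + E x ^ 2) ^ 2 := fun x => by
    have h2 : ((Real.sqrt 2 : ℝ) : ℂ) ^ 2 = 2 := by
      rw [← ofReal_pow, Real.sq_sqrt zero_le_two, ofReal_ofNat]
    rw [hQ, div_pow, mul_pow, mul_pow, mul_pow, h2]
    ring
  have hEexp : E = fun x : ℝ => cexp (c * x + (β * x₂ + I * α * x₁)) :=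
    funext fun x => by rw [hE]; congr 1; simp only [c]; ring
  obtain ⟨hint, hval⟩ := integral_Iic_sq_div_one_add_sq_sq (hasDerivAt_cexp_mul_add _)
    (tendsto_cexp_mul_add_atBot hc) (integrableOn_Iic_cexp_mul_add hc x₀) (hEexp ▸ hden)
  simp_rw [hQsq, hEexp]
  exact ⟨hint, by rw [hval]; ring⟩

theorem stmt_6 (α β x₁ x₂ x₀ : ℝ) (hα : 0 < α) (hβ : 0 < β) (E Q : ℝ → ℂ)
    (hE : ∀ x : ℝ, E x = Complex.exp ((β : ℂ) * (x + x₂) + I * α * (x + x₁)))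
    (hQ : ∀ x : ℝ, Q x = 2 * Real.sqrt 2 * ((β : ℂ) + I * α) * E x / (1 + (E x) ^ 2))
    (hden : ∀ x ≤ x₀, 1 + (E x) ^ 2 ≠ 0) :
    MeasureTheory.IntegrableOn (fun x : ℝ => Q x ^ 2) (Set.Iic x₀) ∧
    (1 / 2 : ℂ) * ∫ x in Set.Iic x₀, Q x ^ 2 =
      2 * ((β : ℂ) + I * α) * (E x₀) ^ 2 / (1 + (E x₀) ^ 2) :=
  stmt_6_general α β x₁ x₂ x₀ hβ E Q hE hQ hden
end

section
/- Fix α, β > 0 and x₁, x₂ ∈ ℝ, y₁ = x + x₁, y₂ = x + x₂. Define Θ₁(x) = (β/α) sin(α y₁)/cosh(β y₂) (real-valued) and Θ₂(x) = e^{β y₂ + i α y₁} (complex-valued). Then for all x ∈ ℝ: (1 + Θ₂²)Θ₁' - (1 + Θ₁²)Θ₂' - (β - iα)(Θ₁ - Θ₁²Θ₂ + Θ₂ - Θ₂²Θ₁) = 0, where primes denote derivatives in x. -/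
/-! Put `u = exp (i α y₁)` and `v = exp (β y₂)`. Then `Θ₂ = u v`, `Θ₂' = (β + i α) Θ₂`, and
`sin (α y₁)`, `cos (α y₁)`, `sinh (β y₂)`, `cosh (β y₂)` are Laurent polynomials in `u` and `v`, so
`Θ₁` and `Θ₁'` are rational in `u`, `v`. After clearing the denominators `α` and `cosh (β y₂)`, the
identity becomes a polynomial identity in `u`, `v`, `α`, `β`, `i` that holds modulo `i² = -1`. -/

open Complex

theorem backlund_identity_of_sin_div_cosh {a b w z T T' Z : ℂ} (ha : a ≠ 0) (hz : cosh z ≠ 0)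
    (hT : T = b / a * sin w / cosh z)
    (hT' : T' = b / a * (a * cos w * cosh z - b * sin w * sinh z) / cosh z ^ 2)
    (hZ : Z = exp (z + I * w)) :
    (1 + Z ^ 2) * T' - (1 + T ^ 2) * ((b + I * a) * Z) -
      (b - I * a) * (T - T ^ 2 * Z + Z - Z ^ 2 * T) = 0 := by
  have hsin : sin w = ((exp (w * I))⁻¹ - exp (w * I)) * I / 2 := by
    rw [← exp_neg, ← neg_mul, ← two_sin]; ring
  have hcos : cos w = (exp (w * I) + (exp (w * I))⁻¹) / 2 := by
    rw [← exp_neg, ← neg_mul, ← two_cos]; ring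
  have hsinh : sinh z = (exp z - (exp z)⁻¹) / 2 := by
    rw [← exp_neg, ← two_sinh]; ring
  have hcosh : cosh z = (exp z + (exp z)⁻¹) / 2 := by
    rw [← exp_neg, ← two_cosh]; ring
  rw [mul_comm I, exp_add] at hZ
  rw [hcosh] at hz
  subst hT hT' hZ
  rw [hsin, hcos, hsinh, hcosh]
  have hu := exp_ne_zero (w * I)
  have hv := exp_ne_zero z
  generalize exp (w * I) = u at *
  generalize exp z = v at *
  have hv2 : v ^ 2 + 1 ≠ 0 := by
    contrapose! hz
    field_simp
    linear_combination hz
  clear hz hsin hcos hsinh hcosh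
  field_simp
  ring_nf
  simp only [I_sq, I_pow_three]
  ring_nf

theorem hasDerivAt_sin_div_cosh (k a b p q x : ℝ) :
    HasDerivAt (fun x => k * Real.sin (a * (x + p)) / Real.cosh (b * (x + q)))
      (k * (a * Real.cos (a * (x + p)) * Real.cosh (b * (x + q)) -
        b * Real.sin (a * (x + p)) * Real.sinh (b * (x + q))) / Real.cosh (b * (x + q)) ^ 2) x := by
  have hsin := (((hasDerivAt_id' x).add_const p).const_mul a).sin.const_mul k
  have hcosh := (((hasDerivAt_id' x).add_const q).const_mul b).cosh
  exact (hsin.div hcosh (Real.cosh_pos _).ne').congr_deriv (by ring)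

theorem hasDerivAt_cexp_affine_s11 (a b p q x : ℝ) :
    HasDerivAt (fun x : ℝ => exp (b * (x + q) + I * a * (x + p)))
      ((b + I * a) * exp (b * (x + q) + I * a * (x + p))) x := by
  have hx := (hasDerivAt_id' x).ofReal_comp
  have hlin :=
    ((hx.add_const (q : ℂ)).const_mul (b : ℂ)).add ((hx.add_const (p : ℂ)).const_mul (I * a))
  exact hlin.cexp.congr_deriv (by simp only [Pi.add_apply, ofReal_one]; ring)

theorem stmt_11_general (α β x₁ x₂ : ℝ) (hα : 0 < α) (Θ₁ Θ₂ : ℝ → ℂ)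
    (hΘ₁ : ∀ x : ℝ, Θ₁ x =
      (((β / α) * Real.sin (α * (x + x₁)) / Real.cosh (β * (x + x₂)) : ℝ) : ℂ))
    (hΘ₂ : ∀ x : ℝ, Θ₂ x = Complex.exp ((β : ℂ) * (x + x₂) + I * α * (x + x₁))) :
    ∀ x : ℝ,
      (1 + Θ₂ x ^ 2) * deriv Θ₁ x - (1 + Θ₁ x ^ 2) * deriv Θ₂ x -
        ((β : ℂ) - I * α) * (Θ₁ x - Θ₁ x ^ 2 * Θ₂ x + Θ₂ x - Θ₂ x ^ 2 * Θ₁ x) = 0 := by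
  intro x
  rw [funext hΘ₁, funext hΘ₂, (hasDerivAt_sin_div_cosh _ α β x₁ x₂ x).ofReal_comp.deriv,
    (hasDerivAt_cexp_affine_s11 α β x₁ x₂ x).deriv]
  refine backlund_identity_of_sin_div_cosh (w := α * (x + x₁)) (z := β * (x + x₂))
    (ofReal_ne_zero.2 hα.ne') ?_ ?_ ?_ ?_
  · exact_mod_cast (Real.cosh_pos _).ne'
  · push_cast; rfl
  · push_cast; rfl
  · ring_nf

theorem stmt_11 (α β x₁ x₂ : ℝ) (hα : 0 < α) (hβ : 0 < β) (Θ₁ Θ₂ : ℝ → ℂ)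
    (hΘ₁ : ∀ x : ℝ, Θ₁ x =
      (((β / α) * Real.sin (α * (x + x₁)) / Real.cosh (β * (x + x₂)) : ℝ) : ℂ))
    (hΘ₂ : ∀ x : ℝ, Θ₂ x = Complex.exp ((β : ℂ) * (x + x₂) + I * α * (x + x₁))) :
    ∀ x : ℝ,
      (1 + Θ₂ x ^ 2) * deriv Θ₁ x - (1 + Θ₁ x ^ 2) * deriv Θ₂ x -
        ((β : ℂ) - I * α) * (Θ₁ x - Θ₁ x ^ 2 * Θ₂ x + Θ₂ x - Θ₂ x ^ 2 * Θ₁ x) = 0 :=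
  stmt_11_general α β x₁ x₂ hα Θ₁ Θ₂ hΘ₁ hΘ₂
end

section
/- Let m ∈ ℂ and let ũ, ṽ : ℝ → ℂ be twice differentiable with u = ũ', v = ṽ'. Assume the Bäcklund relation (u - v)/√2 = m sin((ũ + ṽ)/√2) holds on ℝ. Then for all x: u'(x)² - v'(x)² = m cos((ũ+ṽ)/√2) · (u² + v²)'(x) - √2 m³ cos²((ũ+ṽ)/√2) sin((ũ+ṽ)/√2) · (u(x) + v(x)). -/
/-! Differentiating the Bäcklund relation gives `u' - v' = m cos w · (u + v)` with
`w = (ũ + ṽ)/√2`, so `u'² - v'² = m cos w · (u + v)(u' + v')`. On the other side,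
`(u² + v²)' = 2(u u' + v v')`, and the relation itself turns `√2 m sin w` into `u - v`;
the right-hand side then collapses to the same product. -/

open Complex

theorem deriv_sub_deriv_eq_of_backlund {k m : ℂ} (hk : k ≠ 0) {U V : ℝ → ℂ} {x : ℝ}
    (hu : DifferentiableAt ℝ U x) (hv : DifferentiableAt ℝ V x)
    (hu' : DifferentiableAt ℝ (deriv U) x) (hv' : DifferentiableAt ℝ (deriv V) x)
    (hB : ∀ y, (deriv U y - deriv V y) / k = m * sin ((U y + V y) / k)) :
    deriv (deriv U) x - deriv (deriv V) x =
      m * cos ((U x + V x) / k) * (deriv U x + deriv V x) := by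
  have hL : HasDerivAt (fun y => (deriv U y - deriv V y) / k)
      ((deriv (deriv U) x - deriv (deriv V) x) / k) x :=
    (hu'.hasDerivAt.sub hv'.hasDerivAt).div_const k
  have hR : HasDerivAt (fun y => m * sin ((U y + V y) / k))
      (m * (cos ((U x + V x) / k) * ((deriv U x + deriv V x) / k))) x :=
    (((hasDerivAt_sin _).comp x ((hu.hasDerivAt.fun_add hv.hasDerivAt).div_const k)).const_mul m)
  have h := hL.unique (by simpa only [← funext hB] using hR)
  field_simp at h
  linear_combination h

theorem stmt_17 (m : ℂ) (U V : ℝ → ℂ)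
    (hu : Differentiable ℝ U) (hv : Differentiable ℝ V)
    (hu' : Differentiable ℝ (deriv U)) (hv' : Differentiable ℝ (deriv V))
    (hB : ∀ x : ℝ, (deriv U x - deriv V x) / (Real.sqrt 2 : ℂ) =
      m * Complex.sin ((U x + V x) / (Real.sqrt 2 : ℂ))) :
    ∀ x : ℝ,
      deriv (deriv U) x ^ 2 - deriv (deriv V) x ^ 2 =
        m * Complex.cos ((U x + V x) / (Real.sqrt 2 : ℂ)) *
            deriv (fun y => deriv U y ^ 2 + deriv V y ^ 2) x -
          (Real.sqrt 2 : ℂ) * m ^ 3 * Complex.cos ((U x + V x) / (Real.sqrt 2 : ℂ)) ^ 2 *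
            Complex.sin ((U x + V x) / (Real.sqrt 2 : ℂ)) * (deriv U x + deriv V x) := by
  intro x
  have hs2 : (Real.sqrt 2 : ℂ) ≠ 0 := by simp
  have hdiff := deriv_sub_deriv_eq_of_backlund hs2 (hu x) (hv x) (hu' x) (hv' x) hB
  have hrel : deriv U x - deriv V x =
      Real.sqrt 2 * (m * sin ((U x + V x) / (Real.sqrt 2 : ℂ))) := by
    rw [← hB x]; field_simp
  have hsq : deriv (fun y => deriv U y ^ 2 + deriv V y ^ 2) x =
      2 * deriv U x * deriv (deriv U) x + 2 * deriv V x * deriv (deriv V) x := by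
    have h : HasDerivAt (fun y => deriv U y ^ 2 + deriv V y ^ 2) _ x :=
      ((hu' x).hasDerivAt.fun_pow 2).add ((hv' x).hasDerivAt.fun_pow 2)
    rw [h.deriv]
    push_cast
    ring
  rw [hsq]
  linear_combination
    (deriv (deriv U) x + deriv (deriv V) x
        - m * cos ((U x + V x) / (Real.sqrt 2 : ℂ)) * (deriv U x - deriv V x)) * hdiff
      - m ^ 2 * cos ((U x + V x) / (Real.sqrt 2 : ℂ)) ^ 2 * (deriv U x + deriv V x) * hrel
end

section
/- Let κ₁, κ₂ ∈ ℂ with κ₁ ≠ κ₂ and κ₁ + κ₂ ≠ 0, and let ũ₀, ũ₁, ũ₃, ũ₁₂ : ℝ → ℂ be differentiable with derivatives u₀, u₁, u₃, u₁₂. Assume: (i) (u₁ - u₀)/√2 = κ₁ sin((ũ₁ + ũ₀)/√2); (ii) (u₁₂ - u₁)/√2 = κ₂ sin((ũ₁₂ + ũ₁)/√2); and (iii) tan((ũ₁₂ - ũ₀)/(2√2)) = -ℓ · tan((ũ₃ - ũ₁)/(2√2)) with ℓ = (κ₁ + κ₂)/(κ₁ - κ₂), all holding pointwise on a set where the tangents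 and cosines involved are defined and nonzero as needed. Then on that set, (u₃ - u₀)/√2 = κ₂ sin((ũ₃ + ũ₀)/√2). -/
/-!
Put `α = (ũ₁₂ - ũ₀)/(2√2)`, `β = (ũ₃ - ũ₁)/(2√2)` and `p = (ũ₁ + ũ₀)/(2√2)`. Clearing
denominators, (iii) reads `(κ₁ - κ₂) sin α cos β + (κ₁ + κ₂) sin β cos α = 0`, and differentiating
it on the open set gives a linear equation for `u₃ - u₀` in terms of `u₁ - u₀` and `u₁₂ - u₁`,
which (i) and (ii) express through `sin 2p` and `sin (2p + 2α)`. Expanding `sin (2p + 2α)` and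
`sin (2p + 2β)`, the `cos 2p` terms cancel by the cleared form of (iii) and the `sin 2p` terms by
its square, `(κ₁ + κ₂)² cos² α - (κ₁ - κ₂)² cos² β = 4 κ₁ κ₂ cos² α cos² β`.
-/

open Complex

theorem Complex.sin_mul_cos_add_sin_mul_cos_eq_zero_of_tan_eq {α β c d : ℂ} (hd : d ≠ 0)
    (hα : cos α ≠ 0) (hβ : cos β ≠ 0) (h : tan α = -(c / d) * tan β) :
    d * sin α * cos β + c * sin β * cos α = 0 := by
  rw [tan_eq_sin_div_cos, tan_eq_sin_div_cos] at h
  field_simp at h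
  linear_combination h

theorem Complex.sq_mul_cos_sq_sub_sq_mul_cos_sq {α β c d : ℂ}
    (h : d * sin α * cos β + c * sin β * cos α = 0) :
    c ^ 2 * cos α ^ 2 - d ^ 2 * cos β ^ 2 = (c ^ 2 - d ^ 2) * cos α ^ 2 * cos β ^ 2 := by
  linear_combination (c * sin β * cos α - d * sin α * cos β) * h
    + (d ^ 2 * cos β ^ 2) * sin_sq_add_cos_sq α - (c ^ 2 * cos α ^ 2) * sin_sq_add_cos_sq β

theorem Complex.sin_two_mul_add (p α : ℂ) :
    sin (2 * (p + α)) = sin (2 * p) * (2 * cos α ^ 2 - 1) + cos (2 * p) * (2 * sin α * cos α) := by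
  rw [mul_add, sin_add, sin_two_mul α, cos_two_mul α]

theorem HasDerivAt.ctan {𝕜 : Type*} [NontriviallyNormedField 𝕜] [NormedAlgebra 𝕜 ℂ]
    {f : 𝕜 → ℂ} {f' : ℂ} {x : 𝕜} (hf : HasDerivAt f f' x) (hcos : Complex.cos (f x) ≠ 0) :
    HasDerivAt (fun y => Complex.tan (f y)) (f' / Complex.cos (f x) ^ 2) x := by
  rw [div_eq_inv_mul, ← one_div]
  exact (hasDerivAt_tan hcos).comp x hf

theorem div_cos_sq_eq_of_tan_eq_mul_tan {𝕜 : Type*} [NontriviallyNormedField 𝕜]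
    [NormedAlgebra 𝕜 ℂ] {f g : 𝕜 → ℂ} {f' g' ℓ : ℂ} {S : Set 𝕜} {x : 𝕜}
    (hS : S ∈ nhds x) (h : ∀ y ∈ S, tan (f y) = ℓ * tan (g y))
    (hf : HasDerivAt f f' x) (hg : HasDerivAt g g' x)
    (hfx : cos (f x) ≠ 0) (hgx : cos (g x) ≠ 0) :
    f' / cos (f x) ^ 2 = ℓ * (g' / cos (g x) ^ 2) :=
  (hf.ctan hfx).unique <|
    ((hg.ctan hgx).const_mul ℓ).congr_of_eventuallyEq (Filter.eventually_of_mem hS h)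

theorem permutability_halfAngle {k₁ k₂ p α β A B X : ℂ} (hk : k₁ ≠ k₂) (hk' : k₁ + k₂ ≠ 0)
    (hα : cos α ≠ 0) (hβ : cos β ≠ 0)
    (htan : tan α = -((k₁ + k₂) / (k₁ - k₂)) * tan β)
    (hderiv : (A + B) / 2 / cos α ^ 2 = -((k₁ + k₂) / (k₁ - k₂)) * ((X - A) / 2 / cos β ^ 2))
    (hA : A = k₁ * sin (2 * p)) (hB : B = k₂ * sin (2 * (p + α))) :
    X = k₂ * sin (2 * (p + β)) := by
  have hE := sin_mul_cos_add_sin_mul_cos_eq_zero_of_tan_eq (sub_ne_zero.2 hk) hα hβ htan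
  have hsq := sq_mul_cos_sq_sub_sq_mul_cos_sq hE
  field_simp at hderiv
  rw [sin_two_mul_add] at hB
  apply mul_left_cancel₀ (mul_ne_zero hk' (pow_ne_zero 2 hα))
  rw [sin_two_mul_add]
  linear_combination hderiv + ((k₁ + k₂) * cos α ^ 2 - (k₁ - k₂) * cos β ^ 2) * hA
    - (k₁ - k₂) * cos β ^ 2 * hB - 2 * k₂ * cos α * cos β * cos (2 * p) * hE + sin (2 * p) * hsq

theorem permutability_pointwise {k₁ k₂ s u₀ u₁ u₃ u₁₂ d₀ d₁ d₃ d₁₂ : ℂ} (hs : s ≠ 0)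
    (hk : k₁ ≠ k₂) (hk' : k₁ + k₂ ≠ 0)
    (hα : cos ((u₁₂ - u₀) / (2 * s)) ≠ 0) (hβ : cos ((u₃ - u₁) / (2 * s)) ≠ 0)
    (h₁ : (d₁ - d₀) / s = k₁ * sin ((u₁ + u₀) / s))
    (h₁₂ : (d₁₂ - d₁) / s = k₂ * sin ((u₁₂ + u₁) / s))
    (htan : tan ((u₁₂ - u₀) / (2 * s)) =
      -((k₁ + k₂) / (k₁ - k₂)) * tan ((u₃ - u₁) / (2 * s)))
    (hderiv : (d₁₂ - d₀) / (2 * s) / cos ((u₁₂ - u₀) / (2 * s)) ^ 2 =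
      -((k₁ + k₂) / (k₁ - k₂)) * ((d₃ - d₁) / (2 * s) / cos ((u₃ - u₁) / (2 * s)) ^ 2)) :
    (d₃ - d₀) / s = k₂ * sin ((u₃ + u₀) / s) := by
  have arg₁ : (u₁ + u₀) / s = 2 * ((u₁ + u₀) / (2 * s)) := by field_simp
  have arg₁₂ : (u₁₂ + u₁) / s = 2 * ((u₁ + u₀) / (2 * s) + (u₁₂ - u₀) / (2 * s)) := by
    field_simp; ring
  have arg₃ : (u₃ + u₀) / s = 2 * ((u₁ + u₀) / (2 * s) + (u₃ - u₁) / (2 * s)) := by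
    field_simp; ring
  have deriv₁₂ : (d₁₂ - d₀) / (2 * s) = ((d₁ - d₀) / s + (d₁₂ - d₁) / s) / 2 := by
    field_simp; ring
  have deriv₃ : (d₃ - d₁) / (2 * s) = ((d₃ - d₀) / s - (d₁ - d₀) / s) / 2 := by
    field_simp; ring
  rw [arg₁] at h₁
  rw [arg₁₂] at h₁₂
  rw [deriv₁₂, deriv₃] at hderiv
  rw [arg₃]
  exact permutability_halfAngle hk hk' hα hβ htan hderiv h₁ h₁₂

theorem stmt_19 (κ₁ κ₂ : ℂ) (hκ : κ₁ ≠ κ₂) (hκ' : κ₁ + κ₂ ≠ 0)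
    (U0 U1 U3 U12 : ℝ → ℂ)
    (h₀ : Differentiable ℝ U0) (h₁ : Differentiable ℝ U1)
    (h₃ : Differentiable ℝ U3) (h₁₂ : Differentiable ℝ U12)
    (S : Set ℝ) (hS : IsOpen S)
    (hcos₁ : ∀ x ∈ S, Complex.cos ((U12 x - U0 x) / (2 * (Real.sqrt 2 : ℂ))) ≠ 0)
    (hcos₂ : ∀ x ∈ S, Complex.cos ((U3 x - U1 x) / (2 * (Real.sqrt 2 : ℂ))) ≠ 0)
    (hi : ∀ x ∈ S, (deriv U1 x - deriv U0 x) / (Real.sqrt 2 : ℂ) =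
      κ₁ * Complex.sin ((U1 x + U0 x) / (Real.sqrt 2 : ℂ)))
    (hii : ∀ x ∈ S, (deriv U12 x - deriv U1 x) / (Real.sqrt 2 : ℂ) =
      κ₂ * Complex.sin ((U12 x + U1 x) / (Real.sqrt 2 : ℂ)))
    (hiii : ∀ x ∈ S, Complex.tan ((U12 x - U0 x) / (2 * (Real.sqrt 2 : ℂ))) =
      -((κ₁ + κ₂) / (κ₁ - κ₂)) * Complex.tan ((U3 x - U1 x) / (2 * (Real.sqrt 2 : ℂ)))) :
    ∀ x ∈ S, (deriv U3 x - deriv U0 x) / (Real.sqrt 2 : ℂ) =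
      κ₂ * Complex.sin ((U3 x + U0 x) / (Real.sqrt 2 : ℂ)) := by
  intro x hx
  have hα : HasDerivAt (fun y => (U12 y - U0 y) / (2 * (Real.sqrt 2 : ℂ))) _ x :=
    ((h₁₂ x).hasDerivAt.sub (h₀ x).hasDerivAt).div_const _
  have hβ : HasDerivAt (fun y => (U3 y - U1 y) / (2 * (Real.sqrt 2 : ℂ))) _ x :=
    ((h₃ x).hasDerivAt.sub (h₁ x).hasDerivAt).div_const _
  have hderiv := div_cos_sq_eq_of_tan_eq_mul_tan (hS.mem_nhds hx) hiii hα hβ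
    (hcos₁ x hx) (hcos₂ x hx)
  exact permutability_pointwise (by simp) hκ hκ' (hcos₁ x hx) (hcos₂ x hx) (hi x hx) (hii x hx)
    (hiii x hx) hderiv
end
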